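/- Let φ ≥ 0 and μ ∈ ℝ. Define ρ(μ,φ) = φ/2 + (1/(2√2))·(φ² + 4 + √((φ² + 4)² + 16μ²))^{1/2}, which equals |Re(ζ_1^−)|. Then ρ(μ,φ) > 2 if and only if φ > 3/2, or (φ ∈ [0, 3/2] and |μ| > (4 − φ)√(3 − 2φ)). -/

import Mathlib

open Complex

/-- The exponent `ζ_1^- = -φ/2 - (1/2)√(φ² + 4(iμ + 1))` (principal square root). -/
noncomputable def zetaMinusOne (φ μ : ℝ) : ℂ :=
  -(φ/2 : ℂ) - (1/2) * ((φ^2 + 4*((μ : ℂ) * Complex.I + 1)) ^ ((1:ℂ)/2))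

/-- `ρ(μ,φ) = φ/2 + (1/(2√2))·(φ² + 4 + √((φ² + 4)² + 16μ²))^{1/2}`. -/
noncomputable def rho (μ φ : ℝ) : ℝ :=
  φ/2 + (1/(2 * Real.sqrt 2)) * Real.sqrt (φ^2 + 4 + Real.sqrt ((φ^2 + 4)^2 + 16 * μ^2))

/-!
Since `Re (w ^ (1/2)) = √((‖w‖ + Re w) / 2)`, we get `Re ζ₁⁻ = -ρ`, and `ρ > 0` because the
inner square root exceeds `|φ|`. With `A = φ² + 4` and `S = √(A² + 16μ²)`, the inequality
`ρ > 2` reads `√((A + S) / 2) > 4 - φ`, i.e. `φ > 4` or `S > (φ - 2)(φ - 14)`. Squaring once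
more and using `((φ - 2)(φ - 14))² - A² = 16 (3 - 2φ)(4 - φ)²` turns this into
`φ > 2 ∨ μ² > (3 - 2φ)(4 - φ)²`, which is the stated condition.
-/

theorem Real.lt_sqrt_iff_neg_or_sq_lt {x y : ℝ} : x < √y ↔ x < 0 ∨ x ^ 2 < y := by
  rcases lt_or_ge x 0 with hx | hx
  · exact iff_of_true (hx.trans_le (Real.sqrt_nonneg y)) (Or.inl hx)
  · rw [Real.lt_sqrt hx, or_iff_right hx.not_gt]

theorem Real.mul_sqrt_lt_abs_iff {a b c : ℝ} (ha : 0 ≤ a) (hb : 0 ≤ b) :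
    a * √b < |c| ↔ b * a ^ 2 < c ^ 2 := by
  rw [← sq_lt_sq₀ (by positivity) (abs_nonneg c), mul_pow, Real.sq_sqrt hb, sq_abs, mul_comm]

theorem rho_eq_add_sqrt_div_two (μ φ : ℝ) :
    rho μ φ = (φ + √((φ ^ 2 + 4 + √((φ ^ 2 + 4) ^ 2 + 16 * μ ^ 2)) / 2)) / 2 := by
  rw [rho, Real.sqrt_div' _ zero_le_two]
  ring

theorem zetaMinusOne_re (φ μ : ℝ) : (zetaMinusOne φ μ).re = -rho μ φ := by
  set z : ℂ := φ ^ 2 + 4 * (μ * I + 1)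
  have hre : z.re = φ ^ 2 + 4 := by simp [z, ← ofReal_pow]
  have hnorm : ‖z‖ = √((φ ^ 2 + 4) ^ 2 + 16 * μ ^ 2) := by
    rw [norm_def, normSq_apply, hre]
    congr 1
    simp only [z, ← ofReal_pow, add_im, ofReal_im, mul_im, re_ofNat, ofReal_re, I_im, mul_one,
      I_re, mul_zero, add_zero, one_im, im_ofNat, add_re, mul_re, sub_self, one_re, zero_add]
    ring
  have hsqrt : (z ^ (2⁻¹ : ℂ)).re = √((φ ^ 2 + 4 + √((φ ^ 2 + 4) ^ 2 + 16 * μ ^ 2)) / 2) := by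
    rw [cpow_inv_two_re, hnorm, hre, add_comm]
  have hzeta : (zetaMinusOne φ μ).re = -(φ / 2) - (z ^ (2⁻¹ : ℂ)).re / 2 := by
    simp only [zetaMinusOne, one_div, sub_re, neg_re, div_ofNat_re, ofReal_re, mul_re, inv_re,
      re_ofNat, normSq_ofNat, inv_im, im_ofNat, neg_zero, zero_div, zero_mul, sub_zero, z]
    ring
  rw [hzeta, hsqrt, rho_eq_add_sqrt_div_two]
  ring

theorem rho_pos (μ φ : ℝ) : 0 < rho μ φ := by
  have hS : φ ^ 2 + 4 ≤ √((φ ^ 2 + 4) ^ 2 + 16 * μ ^ 2) :=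
    Real.le_sqrt_of_sq_le (by nlinarith)
  have : -φ < √((φ ^ 2 + 4 + √((φ ^ 2 + 4) ^ 2 + 16 * μ ^ 2)) / 2) :=
    Real.lt_sqrt_of_sq_lt (by linarith)
  rw [rho_eq_add_sqrt_div_two]
  linarith

theorem two_lt_rho_iff (μ φ : ℝ) : 2 < rho μ φ ↔ 2 < φ ∨ (3 - 2 * φ) * (4 - φ) ^ 2 < μ ^ 2 := by
  set S := √((φ ^ 2 + 4) ^ 2 + 16 * μ ^ 2)
  have two_lt : 4 < φ ∨ (φ - 2) * (φ - 14) < 0 ↔ 2 < φ := by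
    constructor
    · rintro (h | h)
      · linarith
      · nlinarith
    · intro h
      rcases lt_or_ge 4 φ with h4 | h4
      · exact Or.inl h4
      · exact Or.inr (mul_neg_of_pos_of_neg (by linarith) (by linarith))
  calc 2 < rho μ φ ↔ 4 - φ < √((φ ^ 2 + 4 + S) / 2) := by
        rw [rho_eq_add_sqrt_div_two]; constructor <;> intro h <;> linarith
    _ ↔ 4 < φ ∨ (φ - 2) * (φ - 14) < S := by
        rw [Real.lt_sqrt_iff_neg_or_sq_lt]
        exact or_congr (by constructor <;> intro h <;> linarith)
          (by constructor <;> intro h <;> linarith)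
    _ ↔ 4 < φ ∨ (φ - 2) * (φ - 14) < 0 ∨ (3 - 2 * φ) * (4 - φ) ^ 2 < μ ^ 2 := by
        rw [Real.lt_sqrt_iff_neg_or_sq_lt]
        refine or_congr_right (or_congr_right ?_)
        constructor <;> intro h <;> linarith
    _ ↔ 2 < φ ∨ (3 - 2 * φ) * (4 - φ) ^ 2 < μ ^ 2 := by
        rw [← or_assoc, two_lt]

theorem two_lt_or_lt_sq_iff (φ μ : ℝ) :
    2 < φ ∨ (3 - 2 * φ) * (4 - φ) ^ 2 < μ ^ 2 ↔
      3/2 < φ ∨ (φ ≤ 3/2 ∧ (4 - φ) * Real.sqrt (3 - 2*φ) < |μ|) := by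
  rcases le_or_gt φ (3/2) with h | h
  · have h2 : ¬ 2 < φ := by linarith
    rw [Real.mul_sqrt_lt_abs_iff (by linarith) (by linarith)]
    simp only [h, h.not_gt, h2, true_and, false_or]
  · refine iff_of_true ?_ (Or.inl h)
    rcases lt_or_ge 2 φ with h2 | h2
    · exact Or.inl h2
    · exact Or.inr <| (mul_neg_of_neg_of_pos (by linarith) (pow_pos (by linarith) 2)).trans_le
        (sq_nonneg μ)

theorem rho_gt_two_iff_general (φ μ : ℝ) :
    rho μ φ = |(zetaMinusOne φ μ).re| ∧
    (2 < rho μ φ ↔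
      (3/2 < φ ∨ (φ ≤ 3/2 ∧ (4 - φ) * Real.sqrt (3 - 2*φ) < |μ|))) :=
  ⟨by rw [zetaMinusOne_re, abs_neg, abs_of_pos (rho_pos μ φ)],
    (two_lt_rho_iff μ φ).trans (two_lt_or_lt_sq_iff φ μ)⟩

/-- `ρ(μ,φ) = |Re ζ_1^-|`, and `ρ(μ,φ) > 2` iff `φ > 3/2` or
(`φ ∈ [0,3/2]` and `|μ| > (4-φ)√(3-2φ)`). -/
theorem rho_gt_two_iff (φ μ : ℝ) (hφ : 0 ≤ φ) :
    rho μ φ = |(zetaMinusOne φ μ).re| ∧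
    (2 < rho μ φ ↔
      (3/2 < φ ∨ (φ ≤ 3/2 ∧ (4 - φ) * Real.sqrt (3 - 2*φ) < |μ|))) :=
  rho_gt_two_iff_general φ μ
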